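/- arXiv:2412.19366 — 4 statements merged into one kernel-verified Lean document; each statement's English description precedes it below -/
import Mathlib

section
/- Let μ₁, μ₂ be probability measures on ℝ^d with μ₂ absolutely continuous with respect to μ₁, and suppose the Radon–Nikodym derivative dμ₂/dμ₁ is essentially bounded with essential supremum K < ∞ (note K ≥ 1 always). Then KL(μ₂ ∥ μ₁) ≤ (1/2) · (log K / (1 − 1/K)) · |μ₂ − μ₁|_TV (reverse Pinsker inequality). -/
/-!
Write `f = dμ₂/dμ₁`, so that `KL(μ₂ ∥ μ₁) = ∫ f log f dμ₁`. On `[0, 1]` the function `t log t` is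
nonpositive, and on `[1, K]` it lies below its chord through `(1, 0)` and `(K, K log K)` by
convexity. Hence `f log f ≤ K log K / (K - 1) · (f - 1)⁺`, and since `∫ (f - 1) dμ₁ = 0`, the
integral of `(f - 1)⁺` is half the total variation distance.
-/

open MeasureTheory Real

lemma Real.mul_log_le_mul_posPart_sub_one {K t : ℝ} (hK : 1 ≤ K) (ht₀ : 0 ≤ t) (htK : t ≤ K) :
    t * log t ≤ K * log K / (K - 1) * (t - 1)⁺ := by
  rcases le_or_gt t 1 with ht₁ | ht₁
  -- this branch covers `K = 1`, where the slope is the junk value `0 / 0 = 0`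
  · have hslope : 0 ≤ K * log K / (K - 1) :=
      div_nonneg (mul_log_nonneg hK) (sub_nonneg.mpr hK)
    exact (mul_log_nonpos ht₀ ht₁).trans (mul_nonneg hslope (posPart_nonneg _))
  · have hsecant := convexOn_mul_log.secant_mono (a := 1) (x := t) (y := K)
      (Set.mem_Ici.mpr zero_le_one) (Set.mem_Ici.mpr ht₀) (Set.mem_Ici.mpr (ht₀.trans htK))
      ht₁.ne' (ht₁.trans_le htK).ne' htK
    simp only [log_one, mul_zero, sub_zero] at hsecant
    rw [posPart_eq_self.mpr (sub_nonneg.mpr ht₁.le), ← div_le_iff₀ (sub_pos.mpr ht₁)]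
    exact hsecant

lemma integral_mul_log_le_mul_integral_posPart_sub_one {α : Type*} [MeasurableSpace α]
    {ν : Measure α} [IsFiniteMeasure ν] {g : α → ℝ} {K : ℝ} (hK : 1 ≤ K)
    (hg : AEStronglyMeasurable g ν) (hgK : ∀ᵐ x ∂ν, g x ∈ Set.Icc 0 K) :
    ∫ x, g x * log (g x) ∂ν ≤ K * log K / (K - 1) * ∫ x, (g x - 1)⁺ ∂ν := by
  obtain ⟨C, hC⟩ := isCompact_Icc.exists_bound_of_continuousOn continuous_mul_log.continuousOn
  have hint_mul_log : Integrable (fun x ↦ g x * log (g x)) ν :=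
    .of_bound (continuous_mul_log.comp_aestronglyMeasurable hg) C
      (hgK.mono fun x hx ↦ hC (g x) hx)
  have hint_posPart : Integrable (fun x ↦ (g x - 1)⁺) ν :=
    (Integrable.of_bound hg K (hgK.mono fun x hx ↦ by
      rw [norm_of_nonneg hx.1]; exact hx.2)).sub (integrable_const 1) |>.pos_part
  rw [← integral_const_mul]
  exact integral_mono_ae hint_mul_log (hint_posPart.const_mul _)
    (hgK.mono fun x hx ↦ mul_log_le_mul_posPart_sub_one hK hx.1 hx.2)

lemma integral_posPart_toReal_rnDeriv_sub_one {α : Type*} [MeasurableSpace α]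
    {μ ν : Measure α} [IsProbabilityMeasure μ] [IsProbabilityMeasure ν] (hμν : μ ≪ ν) :
    ∫ x, ((μ.rnDeriv ν x).toReal - 1)⁺ ∂ν = (∫ x, |(μ.rnDeriv ν x).toReal - 1| ∂ν) / 2 := by
  have hint : Integrable (fun x ↦ (μ.rnDeriv ν x).toReal - 1) ν :=
    Measure.integrable_toReal_rnDeriv.sub (integrable_const 1)
  have hmean : ∫ x, ((μ.rnDeriv ν x).toReal - 1) ∂ν = 0 := by
    rw [integral_sub Measure.integrable_toReal_rnDeriv (integrable_const 1),
      Measure.integral_toReal_rnDeriv hμν]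
    simp
  rw [integral_abs_eq_two_mul_integral_posPart_sub_integral hint, hmean]
  ring

theorem integral_log_toReal_rnDeriv_le_of_toReal_rnDeriv_le {α : Type*} [MeasurableSpace α]
    {μ ν : Measure α} [IsProbabilityMeasure μ] [IsProbabilityMeasure ν] (hμν : μ ≪ ν) {K : ℝ}
    (hK : 1 ≤ K) (hbound : ∀ᵐ x ∂ν, (μ.rnDeriv ν x).toReal ≤ K) :
    ∫ x, log (μ.rnDeriv ν x).toReal ∂μ ≤
      K * log K / (K - 1) / 2 * ∫ x, |(μ.rnDeriv ν x).toReal - 1| ∂ν :=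
  calc ∫ x, log (μ.rnDeriv ν x).toReal ∂μ
      = ∫ x, (μ.rnDeriv ν x).toReal * log (μ.rnDeriv ν x).toReal ∂ν :=
        (integral_toReal_rnDeriv_mul hμν).symm
    _ ≤ K * log K / (K - 1) * ∫ x, ((μ.rnDeriv ν x).toReal - 1)⁺ ∂ν :=
        integral_mul_log_le_mul_integral_posPart_sub_one hK
          (Measure.measurable_rnDeriv μ ν).ennreal_toReal.aestronglyMeasurable
          (hbound.mono fun x hx ↦ ⟨ENNReal.toReal_nonneg, hx⟩)
    _ = _ := by rw [integral_posPart_toReal_rnDeriv_sub_one hμν]; ring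

/-- Reverse Pinsker inequality. -/
theorem reverse_pinsker
    {d : ℕ} (μ₁ μ₂ : Measure (Fin d → ℝ))
    [IsProbabilityMeasure μ₁] [IsProbabilityMeasure μ₂]
    (hac : μ₂ ≪ μ₁) (K : ℝ) (hK1 : 1 ≤ K)
    (hbound : ∀ᵐ x ∂μ₁, (μ₂.rnDeriv μ₁ x).toReal ≤ K) :
    ∫ x, Real.log ((μ₂.rnDeriv μ₁ x).toReal) ∂μ₂ ≤
      (1 / 2) * (Real.log K / (1 - 1 / K)) *
        ∫ x, |(μ₂.rnDeriv μ₁ x).toReal - 1| ∂μ₁ := by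
  have hslope : Real.log K / (1 - 1 / K) = K * Real.log K / (K - 1) := by
    rw [one_sub_div (zero_lt_one.trans_le hK1).ne', div_div_eq_mul_div, mul_comm]
  convert integral_log_toReal_rnDeriv_le_of_toReal_rnDeriv_le hac hK1 hbound using 2
  rw [hslope]
  ring
end

section
/- Let w, a ∈ ℝ^d with λ = ⟨w, a⟩ ≠ 0 and b ∈ ℝ, and define the flow map Φ_t(x) = exp(t w aᵀ)x + (b/λ)(e^{tλ} − 1)w on the half-space H = {x : ⟨a, x⟩ + b > 0}. Then Φ_t maps H bijectively onto H, its inverse is Φ_{−t} restricted to H, and det(DΦ_t) = e^{tλ}. -/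
/-!
`P = λ⁻¹ w aᵀ` is idempotent, so `exp (c P) = 1 + (eᶜ - 1) P`; this gives
`exp (s w aᵀ) = 1 + ((e^{sλ} - 1) / λ) w aᵀ`, whose determinant is `e^{sλ}` by the matrix
determinant lemma. Hence `Φₛ x = x + ((e^{sλ} - 1) / λ) (⟨a, x⟩ + b) w`, so that
`⟨a, Φₛ x⟩ + b = e^{sλ} (⟨a, x⟩ + b)`: each `Φₛ` preserves `H`, and `Φ₋ₛ ∘ Φₛ = id`.
-/

open Matrix

theorem IsIdempotentElem.exp_smul {A : Type*} [NormedRing A] [NormedAlgebra ℝ A]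
    [CompleteSpace A] {P : A} (hP : IsIdempotentElem P) (c : ℝ) :
    NormedSpace.exp (c • P) = 1 + (Real.exp c - 1) • P := by
  have hterm : ∀ n : ℕ, (n.factorial : ℝ)⁻¹ • (c • P) ^ n =
      ((n.factorial : ℝ)⁻¹ * c ^ n) • P + if n = 0 then 1 - P else 0 := by
    rintro (_ | n)
    · simp
    · rw [smul_pow, hP.pow_succ_eq, smul_smul, if_neg n.succ_ne_zero, add_zero]
  have hexp : HasSum (fun n : ℕ => (n.factorial : ℝ)⁻¹ * c ^ n) (Real.exp c) := by
    simpa [Real.exp_eq_exp_ℝ] using NormedSpace.exp_series_hasSum_exp' (𝕂 := ℝ) c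
  have hsum := (hexp.smul_const P).add (hasSum_ite_eq 0 (1 - P))
  rw [← funext hterm] at hsum
  rw [(NormedSpace.exp_series_hasSum_exp' (𝕂 := ℝ) (c • P)).unique hsum, sub_smul, one_smul]
  abel

section

variable {n : Type*} [Fintype n]

theorem isIdempotentElem_inv_smul_vecMulVec {K : Type*} [Field K] (w a : n → K) :
    IsIdempotentElem ((a ⬝ᵥ w)⁻¹ • vecMulVec w a) := by
  by_cases h : a ⬝ᵥ w = 0
  · simp [h, IsIdempotentElem]
  · rw [IsIdempotentElem, smul_mul_smul, vecMulVec_mul_vecMulVec, vecMulVec_smul, smul_smul,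
      inv_mul_cancel_right₀ h]

variable [DecidableEq n]

theorem det_one_add_vecMulVec {R : Type*} [CommRing R] (u v : n → R) :
    det (1 + vecMulVec u v) = 1 + v ⬝ᵥ u := by
  rw [vecMulVec_eq Unit, det_one_add_replicateCol_mul_replicateRow]

theorem exp_smul_vecMulVec (w a : n → ℝ) (h : a ⬝ᵥ w ≠ 0) (s : ℝ) :
    NormedSpace.exp (s • vecMulVec w a) =
      1 + ((Real.exp (s * (a ⬝ᵥ w)) - 1) / (a ⬝ᵥ w)) • vecMulVec w a := by
  let : NormedRing (Matrix n n ℝ) := Matrix.linftyOpNormedRing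
  let : NormedAlgebra ℝ (Matrix n n ℝ) := Matrix.linftyOpNormedAlgebra
  have hs : s • vecMulVec w a = (s * (a ⬝ᵥ w)) • ((a ⬝ᵥ w)⁻¹ • vecMulVec w a) := by
    rw [smul_smul, mul_inv_cancel_right₀ h]
  rw [hs]
  refine ((isIdempotentElem_inv_smul_vecMulVec w a).exp_smul _).trans ?_
  rw [smul_smul, div_eq_mul_inv]

theorem det_exp_smul_vecMulVec (w a : n → ℝ) (h : a ⬝ᵥ w ≠ 0) (s : ℝ) :
    det (NormedSpace.exp (s • vecMulVec w a)) = Real.exp (s * (a ⬝ᵥ w)) := by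
  rw [exp_smul_vecMulVec w a h, ← smul_vecMulVec, det_one_add_vecMulVec, dotProduct_smul,
    smul_eq_mul, div_mul_cancel₀ _ h, add_sub_cancel]

theorem exp_smul_vecMulVec_mulVec (w a x : n → ℝ) (h : a ⬝ᵥ w ≠ 0) (s : ℝ) :
    NormedSpace.exp (s • vecMulVec w a) *ᵥ x =
      x + ((Real.exp (s * (a ⬝ᵥ w)) - 1) / (a ⬝ᵥ w) * (a ⬝ᵥ x)) • w := by
  rw [exp_smul_vecMulVec w a h, add_mulVec, one_mulVec, smul_mulVec, vecMulVec_mulVec,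
    op_smul_eq_smul, smul_smul]

end

/-- The flow map Φₜ(x) = exp(t w aᵀ)x + (b/λ)(e^{tλ}−1)w maps the half-space
H = {x : ⟨a,x⟩ + b > 0} bijectively onto itself, with inverse Φ₋ₜ, and the
determinant of its Jacobian exp(t w aᵀ) equals e^{tλ}. -/
theorem halfspace_flow_bijection
    {d : ℕ} (w a : Fin d → ℝ) (b : ℝ) (hwa : w ⬝ᵥ a ≠ 0) (t : ℝ) :
    let lam := w ⬝ᵥ a
    let Φ : ℝ → (Fin d → ℝ) → (Fin d → ℝ) := fun s x =>
      (NormedSpace.exp (s • Matrix.vecMulVec w a)).mulVec x +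
        ((b / lam) * (Real.exp (s * lam) - 1)) • w
    let H : Set (Fin d → ℝ) := {x | 0 < a ⬝ᵥ x + b}
    Set.BijOn (Φ t) H H ∧
      (∀ x ∈ H, Φ (-t) (Φ t x) = x) ∧
      (NormedSpace.exp (t • Matrix.vecMulVec w a)).det = Real.exp (t * lam) := by
  intro lam Φ H
  have hlam : a ⬝ᵥ w = lam := dotProduct_comm a w
  have hlam0 : lam ≠ 0 := hwa
  have haw : a ⬝ᵥ w ≠ 0 := hlam ▸ hwa
  have hΦ (s : ℝ) (x : Fin d → ℝ) :
      Φ s x = x + ((Real.exp (s * lam) - 1) / lam * (a ⬝ᵥ x + b)) • w := by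
    simp only [Φ, exp_smul_vecMulVec_mulVec w a x haw s, hlam, add_assoc, ← add_smul]
    ring_nf
  have hH (s : ℝ) (x : Fin d → ℝ) : a ⬝ᵥ Φ s x + b = Real.exp (s * lam) * (a ⬝ᵥ x + b) := by
    rw [hΦ, dotProduct_add, dotProduct_smul, smul_eq_mul, hlam]
    field_simp
    ring
  have hinv (s : ℝ) (x : Fin d → ℝ) : Φ (-s) (Φ s x) = x := by
    rw [hΦ (-s), hH, hΦ, add_assoc, ← add_smul, add_eq_left, smul_eq_zero, neg_mul,
      Real.exp_neg]
    left
    field_simp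
    ring
  have hmaps (s : ℝ) : Set.MapsTo (Φ s) H H := fun x (hx : 0 < a ⬝ᵥ x + b) => by
    change 0 < a ⬝ᵥ Φ s x + b
    rw [hH]
    positivity
  refine ⟨Set.InvOn.bijOn ⟨fun x _ => hinv t x, fun y _ => ?_⟩ (hmaps t) (hmaps (-t)),
    fun x _ => hinv t x, hlam ▸ det_exp_smul_vecMulVec w a haw t⟩
  simpa using hinv (-t) y
end

section
/- Let σ : ℝ → ℝ be Lipschitz and strictly increasing, extended componentwise to ℝ^d, let d ≥ n ≥ 1, and let μ be a probability measure on ℝ^d absolutely continuous with respect to Lebesgue measure. If y⁽¹⁾, …, y⁽ⁿ⁾ are sampled i.i.d. from μ, then with probability 1 the vectors σ(y⁽¹⁾), …, σ(y⁽ⁿ⁾) are linearly independent in ℝ^d. -/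
/-!
Induct on the number of samples, integrating out one sample at a time (Fubini). If the images
of the remaining samples are linearly independent they span a proper subspace `W`, so it
suffices that `μ {y | σ ∘ y ∈ W} = 0`. Such a `W` lies in the kernel of a nonzero functional `φ`,
say with `φ (e k) ≠ 0`; once all coordinates but the `k`-th are fixed, `φ (σ ∘ y) = 0` has at
most one solution `y k` because `σ` is injective. Hence `{y | σ ∘ y ∈ W}` is Lebesgue-null,
and so `μ`-null.
-/

open MeasureTheory Function Module Submodule

theorem Measure.pi_null_of_ae_insertNth_null {n : ℕ} {α : Fin (n + 1) → Type*}
    [∀ i, MeasurableSpace (α i)] (μ : ∀ i, Measure (α i)) [∀ i, SigmaFinite (μ i)]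
    (i : Fin (n + 1)) {S : Set (∀ j, α j)} (hS : MeasurableSet S)
    (h : ∀ᵐ x ∂Measure.pi (fun j => μ (i.succAbove j)), μ i {t | i.insertNth t x ∈ S} = 0) :
    Measure.pi μ S = 0 := by
  have he := (measurePreserving_piFinSuccAbove μ i).symm
  rw [← he.measure_preimage_equiv, Measure.prod_apply_symm (he.measurable hS)]
  exact (lintegral_congr_ae h).trans lintegral_zero

theorem LinearMap.map_insertNth_eq_smul_add {R M : Type*} [Semiring R] [AddCommMonoid M]
    [Module R M] {n : ℕ} (φ : (Fin (n + 1) → R) →ₗ[R] M) (i : Fin (n + 1)) (s : R)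
    (x : Fin n → R) :
    φ (i.insertNth s x) = s • φ (Pi.single i 1) + φ (i.insertNth 0 x) := by
  have : i.insertNth s x = s • Pi.single i 1 + i.insertNth 0 x := by
    ext j
    cases j using Fin.succAboveCases i <;> simp
  rw [this, map_add, map_smul]

theorem volume_setOf_apply_comp_eq_null {d : ℕ} {σ : ℝ → ℝ} (hσm : Measurable σ)
    (hσi : Injective σ) {φ : (Fin d → ℝ) →ₗ[ℝ] ℝ} (hφ : φ ≠ 0) (c : ℝ) :
    volume {y : Fin d → ℝ | φ (σ ∘ y) = c} = 0 := by
  obtain ⟨k, hk⟩ : ∃ k, φ (Pi.single k 1) ≠ 0 := by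
    by_contra! h
    exact hφ (LinearMap.pi_ext' fun k => LinearMap.ext_ring (h k))
  obtain ⟨m, rfl⟩ : ∃ m, d = m + 1 := Nat.exists_eq_succ_of_ne_zero k.pos.ne'
  refine Measure.pi_null_of_ae_insertNth_null _ k
    (measurableSet_eq_fun (by fun_prop) measurable_const) (ae_of_all _ fun x => ?_)
  refine Set.Subsingleton.measure_zero (fun t ht s hs => hσi ?_) _
  have hcomp (t : ℝ) : σ ∘ k.insertNth t x = k.insertNth (σ t) (σ ∘ x) := by
    ext j
    cases j using Fin.succAboveCases k <;> simp
  have hfiber (t : ℝ) :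
      φ (σ ∘ k.insertNth t x) = σ t * φ (Pi.single k 1) + φ (k.insertNth 0 (σ ∘ x)) := by
    rw [hcomp, LinearMap.map_insertNth_eq_smul_add, smul_eq_mul]
  change φ _ = c at ht hs
  rw [hfiber] at ht hs
  exact mul_right_cancel₀ hk (by linarith)

theorem measure_setOf_comp_mem_null {d : ℕ} {σ : ℝ → ℝ} (hσm : Measurable σ)
    (hσi : Injective σ) {μ : Measure (Fin d → ℝ)} (hac : μ ≪ volume)
    {W : Submodule ℝ (Fin d → ℝ)} (hW : W ≠ ⊤) :
    μ {y | σ ∘ y ∈ W} = 0 := by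
  obtain ⟨φ, hφ, hWφ⟩ := W.exists_le_ker_of_lt_top hW.lt_top
  exact measure_mono_null (fun y (hy : σ ∘ y ∈ W) => LinearMap.mem_ker.mp (hWφ hy))
    (hac (volume_setOf_apply_comp_eq_null hσm hσi hφ 0))

section

variable {E V : Type*} [MeasurableSpace E] [NormedAddCommGroup V] [NormedSpace ℝ V]
  [FiniteDimensional ℝ V] [MeasurableSpace V] [BorelSpace V] {f : E → V}

theorem measurableSet_setOf_not_linearIndependent_comp (hf : Measurable f) (n : ℕ) :
    MeasurableSet {y : Fin n → E | ¬LinearIndependent ℝ (f ∘ y)} :=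
  (isOpen_setOfPred_linearIndependent.measurableSet.preimage
    (measurable_pi_lambda _ fun i => hf.comp (measurable_pi_apply i))).compl

theorem measure_pi_setOf_not_linearIndependent_null (μ : Measure E) [SigmaFinite μ]
    (hf : Measurable f) (hμf : ∀ W : Submodule ℝ V, W ≠ ⊤ → μ (f ⁻¹' W) = 0) :
    ∀ n ≤ finrank ℝ V,
      Measure.pi (fun _ : Fin n => μ) {y | ¬LinearIndependent ℝ (f ∘ y)} = 0
  | 0, _ => by simp
  | n + 1, hn => by
    have ih := measure_pi_setOf_not_linearIndependent_null μ hf hμf n (by omega)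
    refine Measure.pi_null_of_ae_insertNth_null _ 0
      (measurableSet_setOf_not_linearIndependent_comp hf _) ?_
    filter_upwards [measure_eq_zero_iff_ae_notMem.mp ih] with x hx
    have hspan : span ℝ (Set.range (f ∘ x)) ≠ ⊤ := fun h => by
      have := finrank_le_of_span_eq_top h
      rw [Fintype.card_fin] at this
      omega
    refine measure_mono_null (fun t ht => ?_) (hμf _ hspan)
    simp only [Set.mem_ofPred_eq, not_not] at hx ht
    rw [Fin.insertNth_zero', Fin.comp_cons, linearIndependent_finCons] at ht
    simpa [hx] using ht

end

theorem generic_linear_independence_general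
    {d n : ℕ} (hnd : n ≤ d)
    (σ : ℝ → ℝ) (K : NNReal) (hσ_lip : LipschitzWith K σ) (hσ_mono : StrictMono σ)
    (μ : Measure (Fin d → ℝ)) [IsProbabilityMeasure μ] (hac : μ ≪ volume) :
    (Measure.pi fun _ : Fin n => μ)
      {y : Fin n → (Fin d → ℝ) |
        ¬ LinearIndependent ℝ (fun i : Fin n => fun k : Fin d => σ (y i k))} = 0 := by
  have hσm : Measurable σ := hσ_lip.continuous.measurable
  exact measure_pi_setOf_not_linearIndependent_null μ (f := (σ ∘ ·)) (by fun_prop)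
    (fun W hW => measure_setOf_comp_mem_null hσm hσ_mono.injective hac hW)
    n (by rwa [finrank_fin_fun])

/-- For σ Lipschitz and strictly increasing and μ absolutely continuous, n ≤ d i.i.d.
samples from μ have, almost surely, linearly independent images under the
componentwise application of σ. -/
theorem generic_linear_independence
    {d n : ℕ} (hn : 1 ≤ n) (hnd : n ≤ d)
    (σ : ℝ → ℝ) (K : NNReal) (hσ_lip : LipschitzWith K σ) (hσ_mono : StrictMono σ)
    (μ : Measure (Fin d → ℝ)) [IsProbabilityMeasure μ] (hac : μ ≪ volume) :
    (Measure.pi fun _ : Fin n => μ)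
      {y : Fin n → (Fin d → ℝ) |
        ¬ LinearIndependent ℝ (fun i : Fin n => fun k : Fin d => σ (y i k))} = 0 :=
  generic_linear_independence_general hnd σ K hσ_lip hσ_mono μ hac
end

section
/- Let σ : ℝ → ℝ be continuous (applied componentwise to vectors), T > 0, d ≥ n, and y⁽¹⁾,…,y⁽ⁿ⁾ ∈ ℝ^d such that the vectors σ(y⁽¹⁾),…,σ(y⁽ⁿ⁾) are linearly independent. Then there exist ε > 0 and C > 0 such that for all x⁽¹⁾,…,x⁽ⁿ⁾ ∈ ℝ^d with max_i ‖x⁽ⁱ⁾ − y⁽ⁱ⁾‖₁ ≤ ε, there exist a continuous matrix-valued control w : [0,T] → M_{d×d}(ℝ) and C¹ curves x_i : [0,T] → ℝ^d solving ẋ_i(t) = w(t)·σ(x_i(t)), x_i(0) = x⁽ⁱ⁾, x_i(T) = y⁽ⁱ⁾ for all i, with ‖w‖_{C⁰} ≤ (C/T)·max_i ‖x⁽ⁱ⁾ − y⁽ⁱ⁾‖₁. -/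
open Matrix

attribute [local instance] Matrix.normedAddCommGroup

/-!
Moving the points along straight lines from `x` to `y` in time `T` requires the velocities
`V = (y - x) / T`. When the columns `σ(P i)` of the feature matrix `Φ(P)` are linearly
independent, its Gram matrix `Φᵀ Φ` is invertible and `w = V (Φᵀ Φ)⁻¹ Φᵀ` solves `w Φ = V`,
i.e. `w σ(P i) = (y i - x i) / T` for every `i`. Linear independence is an open condition and
the left inverse `(Φᵀ Φ)⁻¹ Φᵀ` depends continuously on `P`, so on a closed ball around `y` it
exists and is bounded by some `K`. The straight lines from points of that ball to `y` stay
inside it, so the control is bounded by `n K dist(x, y) / T`.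
-/

open Metric Finset AffineMap

/- The entrywise sup norm is not submultiplicative; the factor `card m` makes up for it. -/
theorem Matrix.norm_mul_le_card_mul {α l m n : Type*} [NonUnitalNormedRing α]
    [Fintype l] [Fintype m] [Fintype n]
    (A : Matrix l m α) (B : Matrix m n α) :
    ‖A * B‖ ≤ Fintype.card m * ‖A‖ * ‖B‖ := by
  refine (norm_le_iff (by positivity)).2 fun i k => ?_
  calc ‖(A * B) i k‖ = ‖∑ j, A i j * B j k‖ := rfl
    _ ≤ ∑ j, ‖A i j‖ * ‖B j k‖ := norm_sum_le_of_le _ fun j _ => norm_mul_le _ _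
    _ ≤ ∑ _j : m, ‖A‖ * ‖B‖ := sum_le_sum fun j _ =>
        mul_le_mul (norm_entry_le_entrywise_sup_norm A) (norm_entry_le_entrywise_sup_norm B)
          (norm_nonneg _) (norm_nonneg _)
    _ = Fintype.card m * ‖A‖ * ‖B‖ := by simp [mul_assoc]

theorem dist_le_of_forall_sum_abs_sub_le {ι κ : Type*} [Fintype ι] [Nonempty ι] [Fintype κ]
    {x y : ι → κ → ℝ} {r : ℝ} (h : ∀ i, ∑ k, |x i k - y i k| ≤ r) : dist x y ≤ r := by
  have hr : 0 ≤ r := (sum_nonneg fun _ _ => abs_nonneg _).trans (h (Classical.arbitrary ι))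
  refine (dist_pi_le_iff hr).2 fun i => (dist_pi_le_iff hr).2 fun k => ?_
  exact (single_le_sum (f := fun k => |x i k - y i k|) (fun _ _ => abs_nonneg _)
    (mem_univ k)).trans (h i)

section GramLeftInverse

variable {m n : Type*} [Fintype m] [Fintype n] [DecidableEq n]

noncomputable def gramLeftInverse (Φ : Matrix m n ℝ) : Matrix n m ℝ := (Φᵀ * Φ)⁻¹ * Φᵀ

theorem isUnit_det_transpose_mul_self {Φ : Matrix m n ℝ} (hΦ : LinearIndependent ℝ Φ.col) :
    IsUnit (Φᵀ * Φ).det :=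
  (isUnit_iff_isUnit_det _).1
    (PosDef.conjTranspose_mul_self Φ (mulVec_injective_iff.2 hΦ)).isUnit

theorem gramLeftInverse_mul_self {Φ : Matrix m n ℝ} (h : IsUnit (Φᵀ * Φ).det) :
    gramLeftInverse Φ * Φ = 1 := by
  rw [gramLeftInverse, Matrix.mul_assoc, nonsing_inv_mul _ h]

theorem continuousAt_gramLeftInverse {Φ : Matrix m n ℝ} (h : IsUnit (Φᵀ * Φ).det) :
    ContinuousAt gramLeftInverse Φ := by
  have hgram : Continuous fun Ψ : Matrix m n ℝ => Ψᵀ * Ψ :=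
    continuous_id.matrix_transpose.matrix_mul continuous_id
  have hinv : ContinuousAt (fun Ψ : Matrix m n ℝ => (Ψᵀ * Ψ)⁻¹) Φ :=
    (continuousAt_matrix_inv _ (NormedRing.inverse_continuousAt h.unit)).comp
      (f := fun Ψ => Ψᵀ * Ψ) hgram.continuousAt
  exact (continuous_fst.matrix_mul continuous_snd).continuousAt.comp
    (hinv.prodMk continuous_id.matrix_transpose.continuousAt)

theorem exists_closedBall_gramLeftInverse_bound {E : Type*} [PseudoMetricSpace E]
    [ProperSpace E]
    {F : E → Matrix m n ℝ} (hF : Continuous F) {y : E} (hy : IsUnit ((F y)ᵀ * F y).det) :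
    ∃ δ > 0, ∃ K > 0, ∀ P ∈ closedBall y δ,
      IsUnit ((F P)ᵀ * F P).det ∧ ‖gramLeftInverse (F P)‖ ≤ K := by
  have hU : IsOpen {P | IsUnit ((F P)ᵀ * F P).det} :=
    Units.isOpen.preimage (hF.matrix_transpose.matrix_mul hF).matrix_det
  obtain ⟨δ, hδ, hball⟩ := nhds_basis_closedBall.mem_iff.1 (hU.mem_nhds hy)
  have hcont : ContinuousOn (gramLeftInverse ∘ F) (closedBall y δ) := fun P hP =>
    ((continuousAt_gramLeftInverse (hball hP)).comp hF.continuousAt).continuousWithinAt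
  obtain ⟨K, hK⟩ := (isCompact_closedBall y δ).exists_bound_of_continuousOn hcont
  exact ⟨δ, hδ, max K 1, by positivity,
    fun P hP => ⟨hball hP, (hK P hP).trans (le_max_left _ _)⟩⟩

end GramLeftInverse

def featureMatrix {ι κ : Type*} (σ : ℝ → ℝ) (P : ι → κ → ℝ) : Matrix κ ι ℝ :=
  (of fun i k => σ (P i k))ᵀ

theorem continuous_featureMatrix {ι κ : Type*} {σ : ℝ → ℝ} (hσ : Continuous σ) :
    Continuous (featureMatrix (ι := ι) (κ := κ) σ) :=
  continuous_matrix fun k i => hσ.comp ((continuous_apply k).comp (continuous_apply i))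

theorem mulVec_eq_of_mul_transpose_eq {ι κ : Type*} [Fintype κ] {W : Matrix κ κ ℝ}
    {A B : Matrix ι κ ℝ}
    (h : W * Aᵀ = Bᵀ) (i : ι) : W *ᵥ A i = B i := by
  funext k
  simpa [mul_apply, mulVec, dotProduct] using congrFun (congrFun h k) i

theorem exists_control_of_gramLeftInverse_bound {ι κ : Type*} [Fintype ι] [DecidableEq ι]
    [Fintype κ] {σ : ℝ → ℝ} (hσ : Continuous σ) {T : ℝ} (hT : 0 < T) {y : ι → κ → ℝ} {δ K : ℝ}
    (hgood : ∀ P ∈ closedBall y δ, IsUnit ((featureMatrix σ P)ᵀ * featureMatrix σ P).det ∧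
      ‖gramLeftInverse (featureMatrix σ P)‖ ≤ K)
    {x : ι → κ → ℝ} (hx : dist x y ≤ δ) :
    ∃ w : ℝ → Matrix κ κ ℝ, ContinuousOn w (Set.Icc 0 T) ∧
      ∃ γ : ι → ℝ → κ → ℝ,
        (∀ i, γ i 0 = x i ∧ γ i T = y i ∧
          ∀ t ∈ Set.Icc (0 : ℝ) T, HasDerivAt (γ i) (w t *ᵥ fun k => σ (γ i t k)) t) ∧
        ∀ t ∈ Set.Icc (0 : ℝ) T, ‖w t‖ ≤ Fintype.card ι * (dist x y / T) * K := by
  set P : ℝ → ι → κ → ℝ := fun t => lineMap x y (t / T)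
  have hP : ∀ t ∈ Set.Icc 0 T, P t ∈ closedBall y δ := by
    intro t ⟨ht0, htT⟩
    have hs : ‖1 - t / T‖ ≤ 1 := by
      rw [Real.norm_eq_abs, abs_le]
      constructor <;> linarith [div_nonneg ht0 hT.le, (div_le_one hT).2 htT]
    rw [mem_closedBall, dist_lineMap_right]
    exact (mul_le_of_le_one_left dist_nonneg hs).trans hx
  have hPderiv (t : ℝ) : HasDerivAt P (T⁻¹ • (y - x)) t := by
    have hline : HasDerivAt (lineMap x y : ℝ → ι → κ → ℝ) (y - x) (t / T) :=
      hasDerivAt_lineMap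
    exact (hline.scomp t ((hasDerivAt_id t).div_const T)).congr_deriv (by rw [one_div])
  have hPcont : Continuous P := continuous_iff_continuousAt.2 fun t => (hPderiv t).continuousAt
  set V : Matrix κ ι ℝ := (of (T⁻¹ • (y - x) : ι → κ → ℝ))ᵀ
  have hV : ‖V‖ = dist x y / T := by
    rw [norm_transpose, dist_eq_norm', div_eq_inv_mul]
    exact (norm_smul T⁻¹ (y - x)).trans (by rw [Real.norm_eq_abs, abs_inv, abs_of_pos hT])
  have hsolves (t) (ht : t ∈ Set.Icc 0 T) :
      V * gramLeftInverse (featureMatrix σ (P t)) * featureMatrix σ (P t) = V := by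
    rw [Matrix.mul_assoc, gramLeftInverse_mul_self (hgood _ (hP t ht)).1, Matrix.mul_one]
  refine ⟨fun t => V * gramLeftInverse (featureMatrix σ (P t)), fun t ht => ?_, fun i t => P t i,
    fun i => ⟨by simp [P], by simp [P, hT.ne'], fun t ht => ?_⟩, fun t ht => ?_⟩
  · have hA : ContinuousAt (fun t => gramLeftInverse (featureMatrix σ (P t))) t :=
      (continuousAt_gramLeftInverse (hgood _ (hP t ht)).1).comp
        (f := fun t => featureMatrix σ (P t))
        ((continuous_featureMatrix hσ).comp hPcont).continuousAt
    exact ((continuous_const.matrix_mul continuous_id).continuousAt.comp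
      (f := fun t => gramLeftInverse (featureMatrix σ (P t))) hA).continuousWithinAt
  · exact (hasDerivAt_pi.1 (hPderiv t) i).congr_deriv
      (mulVec_eq_of_mul_transpose_eq (hsolves t ht) i).symm
  · calc ‖V * gramLeftInverse (featureMatrix σ (P t))‖
        ≤ Fintype.card ι * ‖V‖ * ‖gramLeftInverse (featureMatrix σ (P t))‖ :=
          norm_mul_le_card_mul _ _
      _ ≤ Fintype.card ι * (dist x y / T) * K := by
          rw [hV]; gcongr; exact (hgood _ (hP t ht)).2

theorem local_controllability_linear_field_general
    {d n : ℕ} (hn : 0 < n) (T : ℝ) (hT : 0 < T)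
    (σ : ℝ → ℝ) (hσ : Continuous σ)
    (y : Fin n → (Fin d → ℝ))
    (hLI : LinearIndependent ℝ (fun i : Fin n => fun k : Fin d => σ (y i k))) :
    ∃ ε > (0 : ℝ), ∃ C > (0 : ℝ), ∀ x : Fin n → (Fin d → ℝ),
      (∀ i, ∑ k, |x i k - y i k| ≤ ε) →
      ∃ w : ℝ → Matrix (Fin d) (Fin d) ℝ, ContinuousOn w (Set.Icc 0 T) ∧
        ∃ γ : Fin n → ℝ → (Fin d → ℝ),
          (∀ i, γ i 0 = x i ∧ γ i T = y i ∧
            ∀ t ∈ Set.Icc (0 : ℝ) T,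
              HasDerivAt (γ i) ((w t).mulVec (fun k => σ (γ i t k))) t) ∧
          ∀ t ∈ Set.Icc (0 : ℝ) T,
            ‖w t‖ ≤ (C / T) *
              Finset.univ.sup' ⟨⟨0, hn⟩, Finset.mem_univ _⟩
                (fun i => ∑ k, |x i k - y i k|) := by
  have : Nonempty (Fin n) := ⟨⟨0, hn⟩⟩
  obtain ⟨ε, hε, K, hK, hgood⟩ := exists_closedBall_gramLeftInverse_bound
    (continuous_featureMatrix hσ) (isUnit_det_transpose_mul_self (Φ := featureMatrix σ y) hLI)
  refine ⟨ε, hε, n * K, by positivity, fun x hx => ?_⟩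
  set D := univ.sup' ⟨⟨0, hn⟩, mem_univ _⟩ fun i => ∑ k, |x i k - y i k|
  have hxD : dist x y ≤ D := dist_le_of_forall_sum_abs_sub_le fun i =>
    le_sup' (fun i => ∑ k, |x i k - y i k|) (mem_univ i)
  obtain ⟨w, hw, γ, hγ, hbound⟩ :=
    exists_control_of_gramLeftInverse_bound hσ hT hgood (hxD.trans (sup'_le _ _ fun i _ => hx i))
  refine ⟨w, hw, γ, hγ, fun t ht => (hbound t ht).trans ?_⟩
  calc (Fintype.card (Fin n) : ℝ) * (dist x y / T) * K ≤ n * (D / T) * K := by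
        rw [Fintype.card_fin]; gcongr
    _ = n * K / T * D := by ring

/-- Local exact controllability with linear-in-parameters vector field ẋ = w(t)σ(x),
with a control bound proportional to the size of the perturbation of the data. -/
theorem local_controllability_linear_field
    {d n : ℕ} (hn : 0 < n) (hnd : n ≤ d) (T : ℝ) (hT : 0 < T)
    (σ : ℝ → ℝ) (hσ : Continuous σ)
    (y : Fin n → (Fin d → ℝ))
    (hLI : LinearIndependent ℝ (fun i : Fin n => fun k : Fin d => σ (y i k))) :
    ∃ ε > (0 : ℝ), ∃ C > (0 : ℝ), ∀ x : Fin n → (Fin d → ℝ),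
      (∀ i, ∑ k, |x i k - y i k| ≤ ε) →
      ∃ w : ℝ → Matrix (Fin d) (Fin d) ℝ, ContinuousOn w (Set.Icc 0 T) ∧
        ∃ γ : Fin n → ℝ → (Fin d → ℝ),
          (∀ i, γ i 0 = x i ∧ γ i T = y i ∧
            ∀ t ∈ Set.Icc (0 : ℝ) T,
              HasDerivAt (γ i) ((w t).mulVec (fun k => σ (γ i t k))) t) ∧
          ∀ t ∈ Set.Icc (0 : ℝ) T,
            ‖w t‖ ≤ (C / T) *
              Finset.univ.sup' ⟨⟨0, hn⟩, Finset.mem_univ _⟩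
                (fun i => ∑ k, |x i k - y i k|) :=
  local_controllability_linear_field_general hn T hT σ hσ y hLI
end
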